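/- Let M > 0, ε > 0, e > 0, f > 0. Define p*(e, f) = e/ε if M·exp(−1) ≤ f, and p*(e, f) = (e/ε)·ln(M/f) otherwise. Then p* is the unique maximizer of R(p) = p·M·exp(−εp/e) over the feasible set {p ≥ 0 : M·exp(−εp/e) ≤ f}. -/

import Mathlib

/-!
Substituting `x = (ε / e) * p` turns the revenue into `(M e / ε) · x e^{-x}` and the
deliverability constraint into `x ≥ log (M / f)`. The function `x e^{-x}` increases strictly up
to its peak at `x = 1` and decreases strictly after it, so over `[log (M / f), ∞)` it has the
unique maximizer `max 1 (log (M / f))`, which is `(ε / e) · p*` in both regimes.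
-/

open Real Set

lemma mul_exp_neg_lt_exp_neg_one {x : ℝ} (hx : x ≠ 1) : x * exp (-x) < exp (-1) := by
  have hx_lt : x < exp (x - 1) := by linarith [add_one_lt_exp (sub_ne_zero.mpr hx)]
  calc x * exp (-x) < exp (x - 1) * exp (-x) := mul_lt_mul_of_pos_right hx_lt (exp_pos _)
    _ = exp (-1) := by rw [← exp_add]; ring_nf

lemma strictAntiOn_mul_exp_neg : StrictAntiOn (fun x : ℝ => x * exp (-x)) (Ici 1) := by
  intro y (hy : 1 ≤ y) x _ hyx
  have hexp : x - y + 1 < exp (x - y) := add_one_lt_exp (sub_ne_zero.mpr hyx.ne')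
  -- `x ≤ y (x - y + 1)` because `(x - y)(1 - y) ≤ 0`
  have hx_lt : x < y * exp (x - y) := by nlinarith
  calc x * exp (-x) < y * exp (x - y) * exp (-x) := mul_lt_mul_of_pos_right hx_lt (exp_pos _)
    _ = y * exp (-y) := by rw [mul_assoc, ← exp_add]; ring_nf

lemma mul_exp_neg_lt_of_le_of_ne_max_one {L x : ℝ} (hLx : L ≤ x) (hx : x ≠ max 1 L) :
    x * exp (-x) < max 1 L * exp (-max 1 L) := by
  rcases le_total L 1 with hL | hL
  · rw [max_eq_left hL] at hx ⊢
    simpa using mul_exp_neg_lt_exp_neg_one hx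
  · rw [max_eq_right hL] at hx ⊢
    exact strictAntiOn_mul_exp_neg hL (hL.trans hLx) (lt_of_le_of_ne hLx (Ne.symm hx))

lemma mul_exp_neg_le_iff_log_div_le {M f x : ℝ} (hM : 0 < M) (hf : 0 < f) :
    M * exp (-x) ≤ f ↔ log (M / f) ≤ x := by
  rw [log_le_iff_le_exp (div_pos hM hf), div_le_iff₀ hf, exp_neg, ← div_eq_mul_inv,
    div_le_iff₀ (exp_pos x), mul_comm]

lemma div_mul_optimalPrice_eq_max {M ε e f : ℝ} (hM : 0 < M) (hε : 0 < ε) (he : 0 < e)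
    (hf : 0 < f) :
    ε / e * (if M * exp (-1) ≤ f then e / ε else e / ε * log (M / f)) =
      max 1 (log (M / f)) := by
  have hcancel : ε / e * (e / ε) = 1 := by field_simp
  split_ifs with h
  · rw [hcancel, max_eq_left ((mul_exp_neg_le_iff_log_div_le hM hf).mp h)]
  · rw [← mul_assoc, hcancel, one_mul,
      max_eq_right (not_le.mp (mt (mul_exp_neg_le_iff_log_div_le hM hf).mpr h)).le]

/-- Two-regime optimal price: p* = e/ε if M·exp(−1) ≤ f, else (e/ε)·ln(M/f),
is the unique maximizer of R(p) = p·M·exp(−εp/e) over {p ≥ 0 : M·exp(−εp/e) ≤ f}. -/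
theorem stmt4 (M ε e f : ℝ) (hM : 0 < M) (hε : 0 < ε) (he : 0 < e) (hf : 0 < f) :
    let pstar : ℝ :=
      if M * Real.exp (-1) ≤ f then e / ε else (e / ε) * Real.log (M / f)
    (0 ≤ pstar ∧ M * Real.exp (-ε * pstar / e) ≤ f) ∧
    ∀ p : ℝ, 0 ≤ p → M * Real.exp (-ε * p / e) ≤ f → p ≠ pstar →
      p * M * Real.exp (-ε * p / e) <
        pstar * M * Real.exp (-ε * pstar / e) := by
  intro pstar
  set k := ε / e
  have hk : 0 < k := div_pos hε he
  have hkp : k * pstar = max 1 (log (M / f)) := div_mul_optimalPrice_eq_max hM hε he hf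
  have harg (p : ℝ) : -ε * p / e = -(k * p) := by ring
  have hrev (p : ℝ) : p * M * exp (-(k * p)) = M / k * (k * p * exp (-(k * p))) := by
    field_simp
  simp only [harg, mul_exp_neg_le_iff_log_div_le hM hf, hrev]
  rw [hkp]
  refine ⟨⟨?_, le_max_right _ _⟩, fun p _ hp hne => ?_⟩
  · exact (mul_nonneg_iff_of_pos_left hk).mp (hkp ▸ zero_le_one.trans (le_max_left _ _))
  · refine mul_lt_mul_of_pos_left (mul_exp_neg_lt_of_le_of_ne_max_one hp ?_) (div_pos hM hk)
    rw [← hkp]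
    exact fun h => hne (mul_left_cancel₀ hk.ne' h)
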